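/- Let a ∈ C¹([0,ℓ]) with a > 0, b ∈ C([0,ℓ]) with b ≥ 0, and p ∈ C([0,T]) with p > 0. For 2 ≤ n ≤ N+1 set K^n(y) = p(t_n) a(y) and c^n(y) = p(t_n) b(y) + T̂_{n,n−1}, and let f^n ∈ C([0,ℓ]). Suppose broken polynomials u_h^1, …, u_h^{N+1} of degree k satisfy, for each n with 2 ≤ n ≤ N+1, the fully discrete L1-NIPG scheme B^n(u_h^n, v) = Σ_{m=1}^M ∫_{K_m} (f^n + T̂_{n,1} u_h^1 + Σ_{j=2}^{n−1} (T̂_{n,j} − T̂_{n,j−1}) u_h^j) v_m dy for all broken polynomials v of degree k, where B^n is the NIPG bilinear form with coefficients K^n, c^n. Then there is a constant C depending only on α and r (not on T, N, M, h, n or the data) such that for every n with 2 ≤ n ≤ N+1, ‖u_h^n‖_{L²(0,ℓ)} ≤ ‖u_h^1‖_{L²(0,ℓ)} + C T^α max_{2 ≤ j ≤ n} ‖f^j‖_{L²(0,ℓ)}. -/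

import Mathlib

/-!
Test the scheme at level `n` with `v = u_h^n`. The two consistency terms of the NIPG form cancel
on the diagonal, so `B^n(u, u) ≥ T̂_{n,n-1} ‖u‖²`, and Cauchy–Schwarz on the right-hand side gives,
with `T̂_{n,0} = 0`,
  `T̂_{n,n-1} ‖u^n‖ ≤ ‖f^n‖ + ∑_{j=1}^{n-1} (T̂_{n,j} - T̂_{n,j-1}) ‖u^j‖`.
Up to the factor `1 / Γ(2-α)`, `T̂_{n,j}` is the secant slope of the concave function `x ^ (1-α)`
on `[t_n - t_{j+1}, t_n - t_j]`, so `T̂_{n,j}` increases with `j`: the weights above are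
nonnegative and telescope to `T̂_{n,n-1}`. Comparing the secant slope on `[t_n - t_2, t_n]` with
the derivative at `t_n ≤ T` gives `T̂_{n,1} ≥ (1-α) T^{-α} / Γ(2-α)`, so `‖f^n‖` is absorbed by
`T̂_{n,1} · C T^α max_j ‖f^j‖` with `C = Γ(2-α) / (1-α)`, and strong induction on `n` concludes.
-/

/-- Graded temporal mesh `t_n = T ((n-1)/N)^r`. -/
noncomputable def tmesh (T r : ℝ) (N n : ℕ) : ℝ := T * (((n : ℝ) - 1) / (N : ℝ)) ^ r

/-- Step sizes `τ_n = t_{n+1} - t_n`. -/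
noncomputable def tau (T r : ℝ) (N n : ℕ) : ℝ := tmesh T r N (n + 1) - tmesh T r N n

/-- L1 coefficients `T̂_{n,j}` (with the convention `T̂_{n,0} = 0`). -/
noncomputable def That (α T r : ℝ) (N n j : ℕ) : ℝ :=
  if j = 0 then 0 else
    ((tmesh T r N n - tmesh T r N j) ^ (1 - α) -
        (tmesh T r N n - tmesh T r N (j + 1)) ^ (1 - α)) /
      (tau T r N j * Real.Gamma (2 - α))

/-- Node `y_m = (m-1) h` with `h = ℓ/M`. -/
noncomputable def node (ℓ : ℝ) (M m : ℕ) : ℝ := ((m : ℝ) - 1) * (ℓ / (M : ℝ))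

/-- The jump `[v(y_m)]` of a broken polynomial `v = (v_1,…,v_M)` at the node `y_m`. -/
noncomputable def jump (ℓ : ℝ) (M : ℕ) (v : ℕ → Polynomial ℝ) (m : ℕ) : ℝ :=
  if m = 1 then (v 1).eval (node ℓ M 1)
  else if m = M + 1 then -((v M).eval (node ℓ M (M + 1)))
  else (v m).eval (node ℓ M m) - (v (m - 1)).eval (node ℓ M m)

/-- The average `{v(y_m)}` of a broken polynomial `v = (v_1,…,v_M)` at the node `y_m`. -/
noncomputable def avg (ℓ : ℝ) (M : ℕ) (v : ℕ → Polynomial ℝ) (m : ℕ) : ℝ :=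
  if m = 1 then (v 1).eval (node ℓ M 1)
  else if m = M + 1 then (v M).eval (node ℓ M (M + 1))
  else ((v m).eval (node ℓ M m) + (v (m - 1)).eval (node ℓ M m)) / 2

/-- The NIPG bilinear form with coefficients `K`, `c` and penalties `σ_m`:
`B(u,v) = Σ_m ∫_{K_m}(K u' v' + c u v) + Σ_m {K(y_m) u'(y_m)}[v(y_m)]
  - Σ_m {K(y_m) v'(y_m)}[u(y_m)] + Σ_m σ_m [u(y_m)][v(y_m)]`. -/
noncomputable def nipg (ℓ : ℝ) (M : ℕ) (K c : ℝ → ℝ) (σ : ℕ → ℝ)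
    (u v : ℕ → Polynomial ℝ) : ℝ :=
  (∑ m ∈ Finset.Icc 1 M, ∫ y in node ℓ M m..node ℓ M (m + 1),
      (K y * (Polynomial.derivative (u m)).eval y * (Polynomial.derivative (v m)).eval y +
        c y * (u m).eval y * (v m).eval y))
  + (∑ m ∈ Finset.Icc 1 (M + 1),
      K (node ℓ M m) * avg ℓ M (fun i => Polynomial.derivative (u i)) m * jump ℓ M v m)
  - (∑ m ∈ Finset.Icc 1 (M + 1),
      K (node ℓ M m) * avg ℓ M (fun i => Polynomial.derivative (v i)) m * jump ℓ M u m)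
  + (∑ m ∈ Finset.Icc 1 (M + 1), σ m * jump ℓ M u m * jump ℓ M v m)

/-- The broken `L²(0,ℓ)` norm of a broken polynomial. -/
noncomputable def brokenL2 (ℓ : ℝ) (M : ℕ) (v : ℕ → Polynomial ℝ) : ℝ :=
  Real.sqrt (∑ m ∈ Finset.Icc 1 M,
    ∫ y in node ℓ M m..node ℓ M (m + 1), ((v m).eval y) ^ 2)

/-- The `L²(0,ℓ)` norm of a function. -/
noncomputable def funL2 (ℓ : ℝ) (f : ℝ → ℝ) : ℝ :=
  Real.sqrt (∫ y in (0 : ℝ)..ℓ, (f y) ^ 2)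

open Finset MeasureTheory

section GradedMesh

variable {T r : ℝ} {N : ℕ}

lemma tmesh_one (hr : r ≠ 0) : tmesh T r N 1 = 0 := by
  simp [tmesh, Real.zero_rpow hr]

lemma tmesh_strictMonoOn (hT : 0 < T) (hr : 0 < r) (hN : 0 < N) :
    StrictMonoOn (tmesh T r N) (Set.Ici 1) := by
  intro i hi j _ hij
  have hi : (1 : ℝ) ≤ i := by exact_mod_cast hi
  have hij : (i : ℝ) < j := by exact_mod_cast hij
  have hN : (0 : ℝ) < N := by exact_mod_cast hN
  unfold tmesh
  gcongr

lemma tmesh_mem_Icc (hT : 0 ≤ T) (hr : 0 < r) (hN : 0 < N) {n : ℕ} (hn₁ : 1 ≤ n)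
    (hn : n ≤ N + 1) : tmesh T r N n ∈ Set.Icc 0 T := by
  have hn₁ : (1 : ℝ) ≤ n := by exact_mod_cast hn₁
  have hn : (n : ℝ) ≤ N + 1 := by exact_mod_cast hn
  have hN : (0 : ℝ) < N := by exact_mod_cast hN
  have h0 : 0 ≤ ((n : ℝ) - 1) / N := div_nonneg (by linarith) hN.le
  have h1 : ((n : ℝ) - 1) / N ≤ 1 := by rw [div_le_one hN]; linarith
  exact ⟨mul_nonneg hT (Real.rpow_nonneg h0 r),
    mul_le_of_le_one_right hT (Real.rpow_le_one h0 h1 hr.le)⟩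

end GradedMesh

section L1Coefficients

variable {α T r : ℝ} {N n j : ℕ}

lemma That_zero : That α T r N n 0 = 0 := if_pos rfl

lemma That_eq_slope (hj : j ≠ 0) :
    That α T r N n j = slope (fun x => x ^ (1 - α))
      (tmesh T r N n - tmesh T r N (j + 1)) (tmesh T r N n - tmesh T r N j) /
        Real.Gamma (2 - α) := by
  rw [That, if_neg hj, slope_def_field, tau, div_div]
  congr 2
  ring

variable (hα : α ∈ Set.Ioo 0 1) (ht : StrictMonoOn (tmesh T r N) (Set.Ici 1))
include hα ht

lemma That_pos (hj : 1 ≤ j) (hjn : j < n) : 0 < That α T r N n j := by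
  have hΓ : 0 < Real.Gamma (2 - α) := Real.Gamma_pos_of_pos (by linarith [hα.2])
  have h1 : tmesh T r N j < tmesh T r N (j + 1) := ht hj (show 1 ≤ j + 1 by omega) (by omega)
  have h2 : tmesh T r N (j + 1) ≤ tmesh T r N n :=
    ht.monotoneOn (show 1 ≤ j + 1 by omega) (show 1 ≤ n by omega) hjn
  rw [That_eq_slope (by omega), slope_def_field]
  refine div_pos (div_pos (sub_pos.2 ?_) (by linarith)) hΓ
  exact Real.rpow_lt_rpow (by linarith) (by linarith) (by linarith [hα.2])

lemma That_pred_le (hj : 1 ≤ j) (hjn : j < n) : That α T r N n (j - 1) ≤ That α T r N n j := by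
  obtain rfl | hj := hj.eq_or_lt
  · exact That_zero.trans_le (That_pos hα ht le_rfl hjn).le
  have hΓ : 0 < Real.Gamma (2 - α) := Real.Gamma_pos_of_pos (by linarith [hα.2])
  have h1 := ht (show 1 ≤ j - 1 by omega) (show 1 ≤ j by omega) (show j - 1 < j by omega)
  have h2 := ht (show 1 ≤ j by omega) (show 1 ≤ j + 1 by omega) (show j < j + 1 by omega)
  have h3 := ht.monotoneOn (show 1 ≤ j + 1 by omega) (show 1 ≤ n by omega) hjn
  rw [That_eq_slope (by omega), That_eq_slope (by omega), Nat.sub_add_cancel (by omega),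
    slope_def_field, slope_def_field]
  gcongr 1
  exact (Real.concaveOn_rpow (by linarith [hα.2]) (by linarith [hα.1])).slope_anti_adjacent
    (Set.mem_Ici.2 (by linarith)) (Set.mem_Ici.2 (by linarith)) (by linarith) (by linarith)

lemma one_le_That_one_mul (ht1 : tmesh T r N 1 = 0) (htn : tmesh T r N n ≤ T) (hn : 2 ≤ n) :
    1 ≤ That α T r N n 1 * (Real.Gamma (2 - α) / (1 - α) * T ^ α) := by
  obtain ⟨hα0, hα1⟩ := hα
  have hΓ : 0 < Real.Gamma (2 - α) := Real.Gamma_pos_of_pos (by linarith)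
  have h2 : 0 < tmesh T r N 2 := ht1 ▸ ht (show 1 ≤ 1 from le_rfl) (show 1 ≤ 2 by omega) one_lt_two
  have h2n : tmesh T r N 2 ≤ tmesh T r N n :=
    ht.monotoneOn (show 1 ≤ 2 by omega) (show 1 ≤ n by omega) hn
  have hn0 : 0 < tmesh T r N n := by linarith
  have hslope : ((1 : ℝ) - α) * tmesh T r N n ^ (-α) ≤ slope (fun x => x ^ (1 - α))
      (tmesh T r N n - tmesh T r N 2) (tmesh T r N n) := by
    have hd := Real.hasDerivAt_rpow_const (x := tmesh T r N n) (p := 1 - α) (Or.inl hn0.ne')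
    rw [show 1 - α - 1 = -α by ring] at hd
    exact (Real.concaveOn_rpow (by linarith) (by linarith)).le_slope_of_hasDerivAt
      (Set.mem_Ici.2 (by linarith)) (Set.mem_Ici.2 hn0.le) (by linarith) hd
  have hTn : 1 ≤ tmesh T r N n ^ (-α) * T ^ α := by
    rw [Real.rpow_neg hn0.le, ← div_eq_inv_mul, one_le_div (by positivity)]
    exact Real.rpow_le_rpow hn0.le htn hα0.le
  rw [That_eq_slope one_ne_zero, ht1, sub_zero]
  calc (1 : ℝ) ≤ (1 - α) * tmesh T r N n ^ (-α) / Real.Gamma (2 - α) *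
        (Real.Gamma (2 - α) / (1 - α) * T ^ α) := by
        field_simp
        linarith
    _ ≤ _ := by
        have : 0 < 1 - α := sub_pos.2 hα1
        have : 0 < T := hn0.trans_le htn
        refine mul_le_mul_of_nonneg_right ?_ (by positivity)
        exact div_le_div_of_nonneg_right hslope hΓ.le

end L1Coefficients

section CauchySchwarz

lemma integral_mul_le_sqrt_mul_sqrt {a b : ℝ} (hab : a ≤ b) {g u : ℝ → ℝ}
    (hg : ContinuousOn g (Set.Icc a b)) (hu : ContinuousOn u (Set.Icc a b)) :
    ∫ y in a..b, g y * u y ≤ √(∫ y in a..b, g y ^ 2) * √(∫ y in a..b, u y ^ 2) := by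
  have integrable : ∀ {φ : ℝ → ℝ}, ContinuousOn φ (Set.Icc a b) → IntervalIntegrable φ volume a b :=
    fun h => h.intervalIntegrable_of_Icc hab
  have hquad : ∀ t : ℝ, 0 ≤ (∫ y in a..b, g y ^ 2) * (t * t) + 2 * (∫ y in a..b, g y * u y) * t
      + ∫ y in a..b, u y ^ 2 := by
    intro t
    have hsq : ∫ y in a..b, (t * g y + u y) ^ 2 = (∫ y in a..b, g y ^ 2) * (t * t)
        + 2 * (∫ y in a..b, g y * u y) * t + ∫ y in a..b, u y ^ 2 := by
      have hexp : ∀ y, (t * g y + u y) ^ 2 = t * t * g y ^ 2 + 2 * t * (g y * u y) + u y ^ 2 :=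
        fun y => by ring
      simp_rw [hexp]
      rw [intervalIntegral.integral_add (integrable (by fun_prop)) (integrable (by fun_prop)),
        intervalIntegral.integral_add (integrable (by fun_prop)) (integrable (by fun_prop)),
        intervalIntegral.integral_const_mul, intervalIntegral.integral_const_mul]
      ring
    exact hsq ▸ intervalIntegral.integral_nonneg hab fun y _ => sq_nonneg _
  have hdisc := discrim_le_zero hquad
  rw [discrim] at hdisc
  calc ∫ y in a..b, g y * u y ≤ |∫ y in a..b, g y * u y| := le_abs_self _
    _ ≤ √((∫ y in a..b, g y ^ 2) * ∫ y in a..b, u y ^ 2) := Real.abs_le_sqrt (by linarith)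
    _ = _ := Real.sqrt_mul (intervalIntegral.integral_nonneg hab fun y _ => sq_nonneg _) _

lemma sum_integral_mul_le_sqrt_mul_sqrt {ι : Type*} (s : Finset ι) {a b : ι → ℝ}
    (hab : ∀ i, a i ≤ b i) {g u : ι → ℝ → ℝ}
    (hg : ∀ i ∈ s, ContinuousOn (g i) (Set.Icc (a i) (b i)))
    (hu : ∀ i ∈ s, ContinuousOn (u i) (Set.Icc (a i) (b i))) :
    ∑ i ∈ s, ∫ y in a i..b i, g i y * u i y ≤
      √(∑ i ∈ s, ∫ y in a i..b i, g i y ^ 2) * √(∑ i ∈ s, ∫ y in a i..b i, u i y ^ 2) :=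
  (sum_le_sum fun i hi => integral_mul_le_sqrt_mul_sqrt (hab i) (hg i hi) (hu i hi)).trans <|
    Real.sum_sqrt_mul_sqrt_le s
      (fun i => intervalIntegral.integral_nonneg (hab i) fun _ _ => sq_nonneg _)
      (fun i => intervalIntegral.integral_nonneg (hab i) fun _ _ => sq_nonneg _)

end CauchySchwarz

section BrokenPolynomials

variable {ℓ : ℝ} {M : ℕ}

lemma node_le_node_succ (hℓ : 0 ≤ ℓ) (m : ℕ) : node ℓ M m ≤ node ℓ M (m + 1) := by
  have : 0 ≤ ℓ / M := by positivity
  simp only [node, Nat.cast_add, Nat.cast_one]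
  nlinarith

lemma Icc_node_subset_Icc (hℓ : 0 ≤ ℓ) {m : ℕ} (hm : m ∈ Icc 1 M) :
    Set.Icc (node ℓ M m) (node ℓ M (m + 1)) ⊆ Set.Icc 0 ℓ := by
  obtain ⟨h1, h2⟩ := mem_Icc.1 hm
  have h1 : (1 : ℝ) ≤ m := by exact_mod_cast h1
  have h2 : (m : ℝ) ≤ M := by exact_mod_cast h2
  have hM : (0 : ℝ) < M := by linarith
  apply Set.Icc_subset_Icc
  · exact mul_nonneg (by linarith) (by positivity)
  · simp only [node, Nat.cast_add, Nat.cast_one, add_sub_cancel_right]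
    rw [mul_div_assoc', div_le_iff₀ hM]
    exact mul_le_mul_of_nonneg_right h2 hℓ |>.trans_eq (mul_comm _ _)

lemma sum_integral_node_eq (hℓ : 0 ≤ ℓ) (hM : M ≠ 0) {g : ℝ → ℝ}
    (hg : ContinuousOn g (Set.Icc 0 ℓ)) :
    ∑ m ∈ Icc 1 M, ∫ y in node ℓ M m..node ℓ M (m + 1), g y = ∫ y in (0 : ℝ)..ℓ, g y := by
  rw [← Finset.Ico_add_one_right_eq_Icc, intervalIntegral.sum_integral_adjacent_intervals_Ico
    (by omega) fun m hm => (hg.mono (Icc_node_subset_Icc hℓ (by simpa [Nat.lt_succ_iff] using hm)))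
      |>.intervalIntegrable_of_Icc (node_le_node_succ hℓ m)]
  simp [node, mul_div_cancel₀ ℓ (Nat.cast_ne_zero.2 hM)]

lemma brokenL2_sq (hℓ : 0 ≤ ℓ) (u : ℕ → Polynomial ℝ) :
    brokenL2 ℓ M u ^ 2 = ∑ m ∈ Icc 1 M, ∫ y in node ℓ M m..node ℓ M (m + 1), (u m).eval y ^ 2 :=
  Real.sq_sqrt <| sum_nonneg fun m _ =>
    intervalIntegral.integral_nonneg (node_le_node_succ hℓ m) fun _ _ => sq_nonneg _

lemma sum_integral_eval_mul_eval_le (hℓ : 0 ≤ ℓ) (w u : ℕ → Polynomial ℝ) :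
    ∑ m ∈ Icc 1 M, ∫ y in node ℓ M m..node ℓ M (m + 1), (w m).eval y * (u m).eval y ≤
      brokenL2 ℓ M w * brokenL2 ℓ M u :=
  sum_integral_mul_le_sqrt_mul_sqrt _ (node_le_node_succ hℓ)
    (fun m _ => (w m).continuous.continuousOn) (fun m _ => (u m).continuous.continuousOn)

lemma sum_integral_mul_eval_le (hℓ : 0 ≤ ℓ) (hM : M ≠ 0) {f : ℝ → ℝ}
    (hf : ContinuousOn f (Set.Icc 0 ℓ)) (u : ℕ → Polynomial ℝ) :
    ∑ m ∈ Icc 1 M, ∫ y in node ℓ M m..node ℓ M (m + 1), f y * (u m).eval y ≤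
      funL2 ℓ f * brokenL2 ℓ M u := by
  rw [funL2, ← sum_integral_node_eq hℓ hM (g := fun y => f y ^ 2) (hf.pow 2)]
  exact sum_integral_mul_le_sqrt_mul_sqrt _ (node_le_node_succ hℓ)
    (fun m hm => hf.mono (Icc_node_subset_Icc hℓ hm)) (fun m _ => (u m).continuous.continuousOn)

lemma integral_add_sum_mul {ι : Type*} {a b : ℝ} (hab : a ≤ b) {φ u : ℝ → ℝ} {s : Finset ι}
    {d : ι → ℝ} {w : ι → ℝ → ℝ} (hφ : ContinuousOn φ (Set.Icc a b))
    (hw : ∀ j ∈ s, ContinuousOn (w j) (Set.Icc a b)) (hu : ContinuousOn u (Set.Icc a b)) :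
    ∫ y in a..b, (φ y + ∑ j ∈ s, d j * w j y) * u y =
      (∫ y in a..b, φ y * u y) + ∑ j ∈ s, d j * ∫ y in a..b, w j y * u y := by
  have hexp : ∀ y, (φ y + ∑ j ∈ s, d j * w j y) * u y =
      φ y * u y + ∑ j ∈ s, d j * (w j y * u y) := fun y => by
    simp only [add_mul, sum_mul, mul_assoc]
  have hwu : ∀ j ∈ s, IntervalIntegrable (fun y => d j * (w j y * u y)) volume a b :=
    fun j hj => (continuousOn_const.mul ((hw j hj).mul hu)).intervalIntegrable_of_Icc hab
  have hsum : IntervalIntegrable (fun y => ∑ j ∈ s, d j * (w j y * u y)) volume a b :=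
    (continuousOn_finsetSum s fun j hj => continuousOn_const.mul ((hw j hj).mul hu))
      |>.intervalIntegrable_of_Icc hab
  have hφu : IntervalIntegrable (fun y => φ y * u y) volume a b :=
    (hφ.mul hu).intervalIntegrable_of_Icc hab
  simp_rw [hexp]
  rw [intervalIntegral.integral_add hφu hsum, intervalIntegral.integral_finsetSum hwu]
  simp_rw [intervalIntegral.integral_const_mul]

lemma sum_integral_add_sum_mul_le {ι : Type*} (hℓ : 0 ≤ ℓ) (hM : M ≠ 0) {f : ℝ → ℝ}
    (hf : ContinuousOn f (Set.Icc 0 ℓ)) {s : Finset ι} {d : ι → ℝ} (hd : ∀ j ∈ s, 0 ≤ d j)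
    (w : ι → ℕ → Polynomial ℝ) (u : ℕ → Polynomial ℝ) :
    ∑ m ∈ Icc 1 M, ∫ y in node ℓ M m..node ℓ M (m + 1),
        (f y + ∑ j ∈ s, d j * (w j m).eval y) * (u m).eval y ≤
      (funL2 ℓ f + ∑ j ∈ s, d j * brokenL2 ℓ M (w j)) * brokenL2 ℓ M u := by
  rw [sum_congr rfl fun m hm => integral_add_sum_mul (node_le_node_succ hℓ m)
      (hf.mono (Icc_node_subset_Icc hℓ hm)) (fun j _ => (w j m).continuous.continuousOn)
      (u m).continuous.continuousOn,
    sum_add_distrib, sum_comm, add_mul, sum_mul]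
  refine add_le_add (sum_integral_mul_eval_le hℓ hM hf u) (sum_le_sum fun j hj => ?_)
  rw [← mul_sum, mul_assoc]
  exact mul_le_mul_of_nonneg_left (sum_integral_eval_mul_eval_le hℓ (w j) u) (hd j hj)

lemma nipg_self (K c : ℝ → ℝ) (σ : ℕ → ℝ) (u : ℕ → Polynomial ℝ) :
    nipg ℓ M K c σ u u =
      (∑ m ∈ Icc 1 M, ∫ y in node ℓ M m..node ℓ M (m + 1),
        (K y * (u m).derivative.eval y * (u m).derivative.eval y +
          c y * (u m).eval y * (u m).eval y))
      + ∑ m ∈ Icc 1 (M + 1), σ m * jump ℓ M u m * jump ℓ M u m := by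
  unfold nipg
  ring

lemma mul_brokenL2_sq_le_nipg_self (hℓ : 0 ≤ ℓ) {K c : ℝ → ℝ} {c₀ : ℝ} {σ : ℕ → ℝ}
    (hK : ContinuousOn K (Set.Icc 0 ℓ)) (hK₀ : ∀ y ∈ Set.Icc 0 ℓ, 0 ≤ K y)
    (hc : ContinuousOn c (Set.Icc 0 ℓ)) (hc₀ : ∀ y ∈ Set.Icc 0 ℓ, c₀ ≤ c y) (hσ : ∀ m, 0 ≤ σ m)
    (u : ℕ → Polynomial ℝ) :
    c₀ * brokenL2 ℓ M u ^ 2 ≤ nipg ℓ M K c σ u u := by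
  rw [nipg_self, brokenL2_sq hℓ, mul_sum]
  refine le_add_of_le_of_nonneg (sum_le_sum fun m hm => ?_)
    (sum_nonneg fun m _ => by rw [mul_assoc]; exact mul_nonneg (hσ m) (mul_self_nonneg _))
  have hsub := Icc_node_subset_Icc hℓ hm
  have hu := (u m).continuous.continuousOn (s := Set.Icc (node ℓ M m) (node ℓ M (m + 1)))
  have hu' := (u m).derivative.continuous.continuousOn
    (s := Set.Icc (node ℓ M m) (node ℓ M (m + 1)))
  rw [← intervalIntegral.integral_const_mul]
  refine intervalIntegral.integral_mono_on (node_le_node_succ hℓ m)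
    ((continuousOn_const.mul (hu.pow 2)).intervalIntegrable_of_Icc (node_le_node_succ hℓ m))
    ((((hK.mono hsub).mul hu').mul hu').add (((hc.mono hsub).mul hu).mul hu)
      |>.intervalIntegrable_of_Icc (node_le_node_succ hℓ m)) fun y hy => ?_
  nlinarith [hK₀ y (hsub hy), hc₀ y (hsub hy), mul_self_nonneg ((u m).derivative.eval y),
    sq_nonneg ((u m).eval y)]

theorem mul_brokenL2_le_of_nipg_self_eq {ι : Type*} (hℓ : 0 ≤ ℓ) (hM : M ≠ 0) {K c : ℝ → ℝ}
    {c₀ : ℝ} {σ : ℕ → ℝ} (hK : ContinuousOn K (Set.Icc 0 ℓ)) (hK₀ : ∀ y ∈ Set.Icc 0 ℓ, 0 ≤ K y)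
    (hc : ContinuousOn c (Set.Icc 0 ℓ)) (hc₀ : ∀ y ∈ Set.Icc 0 ℓ, c₀ ≤ c y) (hσ : ∀ m, 0 ≤ σ m)
    {f : ℝ → ℝ} (hf : ContinuousOn f (Set.Icc 0 ℓ)) {s : Finset ι} {d : ι → ℝ}
    (hd : ∀ j ∈ s, 0 ≤ d j) (w : ι → ℕ → Polynomial ℝ) {u : ℕ → Polynomial ℝ}
    (hu : nipg ℓ M K c σ u u = ∑ m ∈ Icc 1 M, ∫ y in node ℓ M m..node ℓ M (m + 1),
        (f y + ∑ j ∈ s, d j * (w j m).eval y) * (u m).eval y) :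
    c₀ * brokenL2 ℓ M u ≤ funL2 ℓ f + ∑ j ∈ s, d j * brokenL2 ℓ M (w j) := by
  have henergy : c₀ * brokenL2 ℓ M u * brokenL2 ℓ M u ≤
      (funL2 ℓ f + ∑ j ∈ s, d j * brokenL2 ℓ M (w j)) * brokenL2 ℓ M u := by
    rw [mul_assoc, ← sq]
    exact (mul_brokenL2_sq_le_nipg_self hℓ hK hK₀ hc hc₀ hσ u).trans
      (hu ▸ sum_integral_add_sum_mul_le hℓ hM hf hd w u)
  have hnonneg : 0 ≤ brokenL2 ℓ M u := Real.sqrt_nonneg _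
  rcases hnonneg.eq_or_lt with h0 | hpos
  · rw [← h0, mul_zero]
    exact add_nonneg (Real.sqrt_nonneg _)
      (sum_nonneg fun j hj => mul_nonneg (hd j hj) (Real.sqrt_nonneg _))
  · exact le_of_mul_le_mul_right henergy hpos

end BrokenPolynomials

section DiscreteStability

lemma sum_Ioc_sub_pred (f : ℕ → ℝ) {m n : ℕ} (hmn : m ≤ n) :
    ∑ j ∈ Ioc m n, (f j - f (j - 1)) = f n - f m := by
  induction n, hmn using Nat.le_induction with
  | base => simp
  | succ n hmn ih =>
    rw [sum_Ioc_succ_top hmn, ih, Nat.add_sub_cancel]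
    ring

lemma mul_add_sum_Icc_sub_pred {A x : ℕ → ℝ} (hA₀ : A 0 = 0) {n : ℕ} (hn : 1 ≤ n) :
    A 1 * x 1 + ∑ j ∈ Icc 2 n, (A j - A (j - 1)) * x j =
      ∑ j ∈ Icc 1 n, (A j - A (j - 1)) * x j := by
  rw [← add_sum_Ioc_eq_sum_Icc hn, ← Icc_add_one_left_eq_Ioc, Nat.sub_self, hA₀, sub_zero]
  rfl

theorem le_add_mul_sup'_of_l1_recurrence {A : ℕ → ℕ → ℝ} {E g : ℕ → ℝ} {c : ℝ} {N : ℕ}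
    (hc : 0 ≤ c) (hg : ∀ n, 0 ≤ g n) (hA₀ : ∀ n, A n 0 = 0)
    (hApos : ∀ n, 2 ≤ n → n ≤ N + 1 → 0 < A n (n - 1))
    (hAmono : ∀ n j, 1 ≤ j → j < n → n ≤ N + 1 → A n (j - 1) ≤ A n j)
    (hA₁ : ∀ n, 2 ≤ n → n ≤ N + 1 → 1 ≤ A n 1 * c)
    (hE : ∀ n, 2 ≤ n → n ≤ N + 1 →
      A n (n - 1) * E n ≤ g n + ∑ j ∈ Icc 1 (n - 1), (A n j - A n (j - 1)) * E j) :
    ∀ n (hn : 2 ≤ n), n ≤ N + 1 → E n ≤ E 1 + c * (Icc 2 n).sup' (nonempty_Icc.2 hn) g := by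
  intro n
  induction n using Nat.strong_induction_on with
  | _ n ih =>
  intro hn hnN
  set F := (Icc 2 n).sup' (nonempty_Icc.2 hn) g
  have hgF : g n ≤ F := le_sup' g (mem_Icc.2 ⟨hn, le_rfl⟩)
  have hF : 0 ≤ F := (hg n).trans hgF
  have hprev : ∀ j ∈ Ioc 1 (n - 1),
      (A n j - A n (j - 1)) * E j ≤ (A n j - A n (j - 1)) * (E 1 + c * F) := by
    intro j hj
    obtain ⟨hj1, hjn⟩ := mem_Ioc.1 hj
    refine mul_le_mul_of_nonneg_left ((ih j (by omega) hj1 (by omega)).trans ?_)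
      (sub_nonneg.2 (hAmono n j (by omega) (by omega) hnN))
    gcongr
    exact sup'_mono g (Icc_subset_Icc_right (by omega)) _
  have hsum := sum_le_sum hprev
  rw [← sum_mul, sum_Ioc_sub_pred (A n) (by omega)] at hsum
  have hrec := hE n hn hnN
  rw [← add_sum_Ioc_eq_sum_Icc (by omega), Nat.sub_self, hA₀, sub_zero] at hrec
  refine le_of_mul_le_mul_left ?_ (hApos n hn hnN)
  nlinarith [mul_le_mul_of_nonneg_right (hA₁ n hn hnN) hF]

end DiscreteStability

/-- global `L²` stability of the fully discrete L1-NIPG scheme: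
there is `C = C(α,r)` with `‖u_h^n‖ ≤ ‖u_h^1‖ + C T^α max_{2≤j≤n} ‖f^j‖`. -/
theorem l1nipg_stability (α r : ℝ) (hα : α ∈ Set.Ioo (0 : ℝ) 1) (hr : 1 ≤ r) :
    ∃ C : ℝ, 0 < C ∧
      ∀ T : ℝ, 0 < T → ∀ N : ℕ, 0 < N → ∀ ℓ : ℝ, 0 < ℓ →
      ∀ M k : ℕ, 1 ≤ M → 1 ≤ k →
      ∀ a a' b p : ℝ → ℝ,
        (∀ y ∈ Set.Icc 0 ℓ, HasDerivAt a (a' y) y) →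
        ContinuousOn a' (Set.Icc 0 ℓ) →
        (∀ y ∈ Set.Icc 0 ℓ, 0 < a y) →
        ContinuousOn b (Set.Icc 0 ℓ) → (∀ y ∈ Set.Icc 0 ℓ, 0 ≤ b y) →
        ContinuousOn p (Set.Icc 0 T) → (∀ t ∈ Set.Icc 0 T, 0 < p t) →
      ∀ σ : ℕ → ℝ, (∀ m, 0 ≤ σ m) →
      ∀ f : ℕ → ℝ → ℝ, (∀ n, ContinuousOn (f n) (Set.Icc 0 ℓ)) →
      ∀ uh : ℕ → ℕ → Polynomial ℝ, (∀ n m, (uh n m).degree ≤ k) →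
        (∀ n, 2 ≤ n → n ≤ N + 1 →
          ∀ v : ℕ → Polynomial ℝ, (∀ m, (v m).degree ≤ k) →
            nipg ℓ M (fun y => p (tmesh T r N n) * a y)
                (fun y => p (tmesh T r N n) * b y + That α T r N n (n - 1)) σ (uh n) v =
              ∑ m ∈ Finset.Icc 1 M, ∫ y in node ℓ M m..node ℓ M (m + 1),
                (f n y + That α T r N n 1 * (uh 1 m).eval y +
                    ∑ j ∈ Finset.Icc 2 (n - 1),
                      (That α T r N n j - That α T r N n (j - 1)) * (uh j m).eval y) *
                  (v m).eval y) →
        ∀ n : ℕ, ∀ hn2 : 2 ≤ n, n ≤ N + 1 →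
          brokenL2 ℓ M (uh n) ≤
            brokenL2 ℓ M (uh 1) +
              C * T ^ α *
                (Finset.Icc 2 n).sup' (Finset.nonempty_Icc.mpr hn2)
                  (fun j => funL2 ℓ (f j)) := by
  have hC : 0 < Real.Gamma (2 - α) / (1 - α) :=
    div_pos (Real.Gamma_pos_of_pos (by linarith [hα.2])) (by linarith [hα.2])
  refine ⟨_, hC, ?_⟩
  intro T hT N hN ℓ hℓ M _ hM _ a _ b p ha _ ha₀ hb hb₀ _ hp₀ σ hσ f hf uh huh hscheme
  have ht := tmesh_strictMonoOn (r := r) hT (by linarith) hN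
  have htn : ∀ n, 2 ≤ n → n ≤ N + 1 → tmesh T r N n ∈ Set.Icc 0 T :=
    fun n hn hnN => tmesh_mem_Icc hT.le (by linarith) hN (by omega) hnN
  refine le_add_mul_sup'_of_l1_recurrence (E := fun n => brokenL2 ℓ M (uh n))
    (g := fun n => funL2 ℓ (f n)) (by positivity) (fun n => Real.sqrt_nonneg _)
    (fun n => That_zero) (fun n hn _ => That_pos hα ht (by omega) (by omega))
    (fun n j hj hjn _ => That_pred_le hα ht hj hjn)
    (fun n hn hnN => one_le_That_one_mul hα ht (tmesh_one (by linarith)) (htn n hn hnN).2 hn)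
    fun n hn hnN => ?_
  have hscheme' := hscheme n hn hnN (uh n) (huh n)
  have hrhs : ∀ m y, That α T r N n 1 * (uh 1 m).eval y
      + ∑ j ∈ Icc 2 (n - 1), (That α T r N n j - That α T r N n (j - 1)) * (uh j m).eval y
      = ∑ j ∈ Icc 1 (n - 1), (That α T r N n j - That α T r N n (j - 1)) * (uh j m).eval y :=
    fun m y => mul_add_sum_Icc_sub_pred (x := fun j => (uh j m).eval y) That_zero (by omega)
  simp only [add_assoc, hrhs] at hscheme'
  have hpn := hp₀ _ (htn n hn hnN)
  refine mul_brokenL2_le_of_nipg_self_eq hℓ.le (by omega) ?_ ?_ ?_ ?_ hσ (hf n) ?_ uh hscheme'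
  · exact continuousOn_const.mul fun y hy => (ha y hy).continuousAt.continuousWithinAt
  · exact fun y hy => mul_nonneg hpn.le (ha₀ y hy).le
  · exact (continuousOn_const.mul hb).add continuousOn_const
  · exact fun y hy => le_add_of_nonneg_left (mul_nonneg hpn.le (hb₀ y hy))
  · exact fun j hj => sub_nonneg.2 (That_pred_le hα ht (mem_Icc.1 hj).1 (by grind))
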